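/- For integers n ≥ 3 define s_n = (∑_{k=1}^{n−2} 1/k) + 13/(12(n−1)) + 5/(12n) − ln n. Then lim_{n→∞} n³·(s_n − γ) = 1/12; in particular (s_n)_{n≥3} converges to γ with rate of convergence exactly n^{−3}. -/

import Mathlib

open Filter Topology

noncomputable def s (n : ℕ) : ℝ :=
  (∑ k ∈ Finset.Icc 1 (n - 2), (1 : ℝ) / k) + 13 / (12 * ((n : ℝ) - 1)) + 5 / (12 * n)
    - Real.log n

/-!
Since `H_{n-2} = H_n - 1/(n-1) - 1/n`, we have `s_n = H_n - log n + 1/(12(n-1)) - 7/(12n)`.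
Expanding `log (1 + 1/n)` to fourth order shows that the increments of
`u_n = s_n - 1/(12n³)` are at most `2/n⁵ ≤ n⁻⁴ - (n+1)⁻⁴` in absolute value. As `u_n → γ`,
telescoping gives `|u_n - γ| ≤ n⁻⁴`, hence `n³(s_n - γ) = 1/12 + O(1/n)`.
-/

open Real

theorem norm_sub_le_of_norm_sub_succ_le {E : Type*} [SeminormedAddCommGroup E] {u : ℕ → E}
    {d : ℕ → ℝ} {L : E} {N : ℕ} (hu : Tendsto u atTop (𝓝 L)) (hd : Tendsto d atTop (𝓝 0))
    (hstep : ∀ n ≥ N, ‖u n - u (n + 1)‖ ≤ d n - d (n + 1)) {n : ℕ} (hn : N ≤ n) :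
    ‖u n - L‖ ≤ d n := by
  have htel : ∀ m ≥ n, ‖u n - u m‖ ≤ d n - d m := by
    intro m hm
    induction m, hm using Nat.le_induction with
    | base => simp
    | succ m hm ih =>
      calc ‖u n - u (m + 1)‖ ≤ ‖u n - u m‖ + ‖u m - u (m + 1)‖ :=
            norm_sub_le_norm_sub_add_norm_sub _ _ _
        _ ≤ (d n - d m) + (d m - d (m + 1)) := add_le_add ih (hstep m (hn.trans hm))
        _ = d n - d (m + 1) := by ring
  have hlim : Tendsto (fun m => d n - d m) atTop (𝓝 (d n)) := by
    simpa using tendsto_const_nhds.sub hd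
  exact le_of_tendsto_of_tendsto ((tendsto_const_nhds.sub hu).norm) hlim
    ((eventually_ge_atTop n).mono htel)

theorem abs_log_one_add_sub_taylor_le {y : ℝ} (hy : |y| < 1) :
    |log (1 + y) - (y - y ^ 2 / 2 + y ^ 3 / 3 - y ^ 4 / 4)| ≤ |y| ^ 5 / (1 - |y|) := by
  have h := abs_log_sub_add_sum_range_le (x := -y) (by rwa [abs_neg]) 4
  simp only [Finset.sum_range_succ, Finset.sum_range_zero, abs_neg, sub_neg_eq_add] at h
  convert h using 2
  push_cast
  ring

theorem abs_log_one_add_inv_sub_taylor_le {x : ℝ} (hx : 3 ≤ x) :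
    |log (1 + x⁻¹) - (x⁻¹ - x⁻¹ ^ 2 / 2 + x⁻¹ ^ 3 / 3 - x⁻¹ ^ 4 / 4)| ≤ 3 / (2 * x ^ 5) := by
  have hx0 : 0 < x := by linarith
  have hx1 : 0 < x - 1 := by linarith
  have hinv : |x⁻¹| < 1 := by
    rw [abs_of_pos (by positivity)]
    exact inv_lt_one_of_one_lt₀ (by linarith)
  refine (abs_log_one_add_sub_taylor_le hinv).trans ?_
  have hrem : |x⁻¹| ^ 5 / (1 - |x⁻¹|) = 1 / (x ^ 4 * (x - 1)) := by
    rw [abs_of_pos (by positivity)]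
    field_simp
  rw [hrem, div_le_div_iff₀ (by positivity) (by positivity)]
  nlinarith [mul_nonneg (pow_pos hx0 4).le (by linarith : (0 : ℝ) ≤ x - 3)]

theorem cubic_div_le_one_div_two_mul_pow_five {x : ℝ} (hx : 3 ≤ x) :
    (2 * x ^ 3 + 3 * x + 3) / (12 * x ^ 4 * (x - 1) * (x + 1) ^ 3) ≤ 1 / (2 * x ^ 5) := by
  have hx0 : 0 < x := by linarith
  have hx1 : 0 < x - 1 := by linarith
  have hpoly : x * (2 * x ^ 3 + 3 * x + 3) ≤ 6 * (x - 1) * (x + 1) ^ 3 := by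
    nlinarith [pow_pos hx0 4, mul_nonneg (sq_nonneg x) (sub_nonneg.2 hx),
      mul_nonneg hx0.le (sub_nonneg.2 hx)]
  rw [div_le_div_iff₀ (by positivity) (by positivity)]
  nlinarith [mul_le_mul_of_nonneg_left hpoly (pow_pos hx0 4).le]

theorem two_div_pow_five_le_sub {x : ℝ} (hx : 3 ≤ x) :
    2 / x ^ 5 ≤ 1 / x ^ 4 - 1 / (x + 1) ^ 4 := by
  have hx0 : 0 < x := by linarith
  have hpoly : 2 * (x + 1) ^ 4 ≤ x * ((x + 1) ^ 4 - x ^ 4) := by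
    nlinarith [mul_nonneg (pow_pos hx0 3).le (sub_nonneg.2 hx),
      mul_nonneg (sq_nonneg x) (sub_nonneg.2 hx), mul_nonneg hx0.le (sub_nonneg.2 hx)]
  rw [div_sub_div _ _ (by positivity) (by positivity),
    div_le_div_iff₀ (by positivity) (by positivity)]
  nlinarith [mul_le_mul_of_nonneg_left hpoly (pow_pos hx0 4).le]

theorem s_eq_harmonic {n : ℕ} (hn : 2 ≤ n) :
    s n = harmonic n - log n + 1 / (12 * ((n : ℝ) - 1)) - 7 / (12 * n) := by
  obtain ⟨m, rfl⟩ := Nat.exists_eq_add_of_le' hn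
  have hsum : ∑ k ∈ Finset.Icc 1 m, (1 : ℝ) / k = harmonic m := by
    simp [harmonic_eq_sum_Icc]
  have hcast : ((m + 2 : ℕ) : ℝ) - 1 = m + 1 := by push_cast; ring
  simp only [s, Nat.add_sub_cancel, hsum, harmonic_succ, hcast]
  push_cast
  field_simp
  ring

theorem tendsto_s : Tendsto s atTop (𝓝 eulerMascheroniConstant) := by
  have hsmall (a c : ℝ) : Tendsto (fun n : ℕ => a / (12 * ((n : ℝ) - c))) atTop (𝓝 0) := by
    refine tendsto_const_nhds.div_atTop (Tendsto.const_mul_atTop (by norm_num) ?_)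
    exact tendsto_atTop_add_const_right _ (-c) tendsto_natCast_atTop_atTop
  have hlim := ((tendsto_harmonic_sub_log.add (hsmall 1 1)).sub (hsmall 7 0))
  rw [add_zero, sub_zero] at hlim
  refine hlim.congr' ?_
  filter_upwards [eventually_ge_atTop 2] with n hn
  rw [s_eq_harmonic hn, sub_zero]

noncomputable def correctedS (n : ℕ) : ℝ := s n - 1 / (12 * (n : ℝ) ^ 3)

theorem abs_correctedS_sub_succ_le {n : ℕ} (hn : 3 ≤ n) :
    |correctedS n - correctedS (n + 1)| ≤ 2 / (n : ℝ) ^ 5 := by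
  set x : ℝ := (n : ℝ) with hx_def
  have hx : 3 ≤ x := by rw [hx_def]; exact_mod_cast hn
  have hx0 : 0 < x := by linarith
  have hx1 : 0 < x - 1 := by linarith
  have hlog : log (x + 1) = log x + log (1 + x⁻¹) := by
    rw [← log_mul hx0.ne' (by positivity)]
    congr 1
    field_simp
  have hsplit : correctedS n - correctedS (n + 1)
      = (log (1 + x⁻¹) - (x⁻¹ - x⁻¹ ^ 2 / 2 + x⁻¹ ^ 3 / 3 - x⁻¹ ^ 4 / 4))
        + (2 * x ^ 3 + 3 * x + 3) / (12 * x ^ 4 * (x - 1) * (x + 1) ^ 3) := by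
    rw [correctedS, correctedS, s_eq_harmonic (by omega), s_eq_harmonic (by omega), harmonic_succ]
    push_cast
    rw [← hx_def, add_sub_cancel_right, hlog]
    generalize log (1 + x⁻¹) = L
    field_simp
    ring
  rw [hsplit]
  calc _ ≤ 3 / (2 * x ^ 5) + 1 / (2 * x ^ 5) := by
        refine (abs_add_le _ _).trans (add_le_add (abs_log_one_add_inv_sub_taylor_le hx) ?_)
        rw [abs_of_pos (by positivity)]
        exact cubic_div_le_one_div_two_mul_pow_five hx
    _ = 2 / x ^ 5 := by ring

theorem abs_correctedS_sub_le {n : ℕ} (hn : 3 ≤ n) :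
    |correctedS n - eulerMascheroniConstant| ≤ 1 / (n : ℝ) ^ 4 := by
  have hpow {k : ℕ} (hk : k ≠ 0) (c : ℝ) : Tendsto (fun n : ℕ => c / (n : ℝ) ^ k) atTop (𝓝 0) :=
    tendsto_const_nhds.div_atTop ((tendsto_pow_atTop hk).comp tendsto_natCast_atTop_atTop)
  have hlim : Tendsto correctedS atTop (𝓝 eulerMascheroniConstant) := by
    refine (sub_zero eulerMascheroniConstant ▸ tendsto_s.sub (hpow three_ne_zero (1 / 12))).congr
      fun n => ?_
    rw [correctedS, div_mul_eq_div_div]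
  refine norm_sub_le_of_norm_sub_succ_le hlim (hpow four_ne_zero 1) (fun m hm => ?_) hn
  have hm' : (3 : ℝ) ≤ m := by exact_mod_cast hm
  simpa only [Real.norm_eq_abs, Nat.cast_add_one] using
    (abs_correctedS_sub_succ_le hm).trans (two_div_pow_five_le_sub hm')

theorem rate_three :
    Tendsto (fun n : ℕ => (n : ℝ) ^ 3 * (s n - Real.eulerMascheroniConstant)) atTop
      (𝓝 (1 / 12)) := by
  have hrem : Tendsto (fun n : ℕ => (n : ℝ) ^ 3 * (correctedS n - eulerMascheroniConstant))
      atTop (𝓝 0) := by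
    refine squeeze_zero_norm' ?_ tendsto_one_div_atTop_nhds_zero_nat
    filter_upwards [eventually_ge_atTop 3] with n hn
    calc _ = (n : ℝ) ^ 3 * |correctedS n - eulerMascheroniConstant| := by
          rw [norm_mul, Real.norm_eq_abs, Real.norm_eq_abs, abs_of_pos (by positivity)]
      _ ≤ (n : ℝ) ^ 3 * (1 / (n : ℝ) ^ 4) := by gcongr; exact abs_correctedS_sub_le hn
      _ = 1 / n := by field_simp
  have hlim := hrem.const_add (1 / 12)
  rw [add_zero] at hlim
  refine hlim.congr' ?_
  filter_upwards [eventually_ge_atTop 1] with n hn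
  have hn0 : (n : ℝ) ≠ 0 := by positivity
  rw [correctedS]
  field_simp
  ring
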